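/- For triwords u and v of size n, the word t obtained from the componentwise minimum s (s_i = min(u_i, v_i)) by replacing every letter 1 that occurs after some letter 0 by 0 is a triword, and t is the greatest triword that is componentwise ≤ both u and v. -/
import Mathlib


def IsTriword {n : ℕ} (u : Fin n → Fin 3) : Prop :=
  (∀ i : Fin n, (i : ℕ) = 0 → u i ≠ 2) ∧
  ∀ i j : Fin n, i < j → u i = 0 → u j ≠ 1

/-- From the componentwise minimum `s` of two triwords `u, v`, replacing every
letter `1` occurring after some letter `0` by `0` yields a triword `t`, which is
the greatest triword componentwise below both `u` and `v`. -/
theorem meet_triwords (n : ℕ) (u v : Fin n → Fin 3)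
    (hu : IsTriword u) (hv : IsTriword v)
    (s t : Fin n → Fin 3)
    (hs : ∀ i, s i = min (u i) (v i))
    (ht : ∀ i, t i = if s i = 1 ∧ ∃ j, j < i ∧ s j = 0 then 0 else s i) :
    IsTriword t ∧ (∀ i, t i ≤ u i) ∧ (∀ i, t i ≤ v i) ∧
      ∀ w : Fin n → Fin 3, IsTriword w →
        (∀ i, w i ≤ u i) → (∀ i, w i ≤ v i) → ∀ i, w i ≤ t i := by
  have hsu : ∀ i, s i ≤ u i := fun i => (hs i) ▸ min_le_left _ _
  have hsv : ∀ i, s i ≤ v i := fun i => (hs i) ▸ min_le_right _ _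
  have hts : ∀ i, t i ≤ s i := by
    intro i
    rw [ht i]
    split
    · exact Fin.zero_le _
    · exact le_refl _
  have le2 : ∀ x : Fin 3, x ≤ 2 := by decide
  refine ⟨⟨?_, ?_⟩, fun i => (hts i).trans (hsu i), fun i => (hts i).trans (hsv i), ?_⟩
  · -- first letter not 2
    intro i hi hti
    have h1 : s i = 2 := le_antisymm (le2 _) (hti ▸ hts i)
    have h2 : u i = 2 := le_antisymm (le2 _) (h1 ▸ hsu i)
    exact hu.1 i hi h2
  · -- no 0 before 1
    intro i j hij hti htj
    rw [ht j] at htj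
    rw [ht i] at hti
    by_cases hc : s j = 1 ∧ ∃ k, k < j ∧ s k = 0
    · simp [hc] at htj
    · simp [hc] at htj
      -- htj : s j = 1, and ¬∃ k < j, s k = 0
      apply hc
      refine ⟨htj, ?_⟩
      by_cases hd : s i = 1 ∧ ∃ k, k < i ∧ s k = 0
      · obtain ⟨-, k, hk, hk0⟩ := hd
        exact ⟨k, hk.trans hij, hk0⟩
      · simp [hd] at hti
        exact ⟨i, hij, hti⟩
  · intro w hw hwu hwv i
    have hws : ∀ k, w k ≤ s k := fun k => (hs k) ▸ le_min (hwu k) (hwv k)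
    rw [ht i]
    split
    · rename_i hc
      obtain ⟨h1, j, hj, hj0⟩ := hc
      -- w i ≤ s i = 1; show w i = 0
      have hwi : w i ≤ 1 := h1 ▸ hws i
      have hwj : w j = 0 := le_antisymm (hj0 ▸ hws j) (Fin.zero_le _)
      by_cases h1 : w i = 1
      · exact absurd h1 (hw.2 j i hj hwj)
      · have key : ∀ x : Fin 3, x ≤ 1 → x ≠ 1 → x = 0 := by decide
        rw [key (w i) hwi h1]
    · exact hws i
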